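/- Let μ = Σ_{ℓ=1}^s w_ℓ δ_{x_ℓ} with −1 ≤ x_1 < x_2 < … < x_s ≤ 1 and w_ℓ > 0, let p be any real polynomial, and let D be the associated alternating sequence of length 2s+1. Then for every positive integer k, ‖p − μ‖_{A_k,[−1,1]} ≥ ‖D‖_{A_k}^{disc}. -/

import Mathlib

open MeasureTheory Set

/-- The `A_k`-distance between a function `g` and a finite Borel measure `μ` on a
subinterval `J`: the supremum over all collections of `k` pairwise disjoint subintervals
`I₁, …, I_k` of `J` of `∑ᵢ |∫_{Iᵢ} g − μ(Iᵢ)|`. -/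
noncomputable def akDist (k : ℕ) (J : Set ℝ) (g : ℝ → ℝ) (μ : Measure ℝ) : ℝ :=
  sSup { s : ℝ | ∃ I : Fin k → Set ℝ,
    (∀ i, I i ⊆ J ∧ (I i).OrdConnected) ∧
    (Pairwise fun i j => Disjoint (I i) (I j)) ∧
    s = ∑ i, |(∫ x in I i, g x) - (μ (I i)).toReal| }

/-- The discrete `A_k`-norm of a finite sequence `a₁, …, a_r`: the supremum over all
collections of at most `k` pairwise disjoint blocks of consecutive indices
`{u, …, v} ⊆ {1, …, r}` of the sum over the collection of `|∑_{i=u}^v aᵢ|`. -/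
noncomputable def akDisc (r k : ℕ) (a : ℕ → ℝ) : ℝ :=
  sSup { s : ℝ | ∃ (m : ℕ) (u v : Fin m → ℕ), m ≤ k ∧
    (∀ j, 1 ≤ u j ∧ u j ≤ v j ∧ v j ≤ r) ∧
    (Pairwise fun j j' => Disjoint (Finset.Icc (u j) (v j)) (Finset.Icc (u j') (v j'))) ∧
    s = ∑ j, |∑ i ∈ Finset.Icc (u j) (v j), a i| }

/-!
A block `{u, …, v}` of indices of `D` corresponds to a subinterval of `[-1, 1]` running from
`x_{⌊u/2⌋}` to `x_{⌈v/2⌉}`: the odd entries of the block are the integrals of `p` over the gaps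
it covers, and by including an endpoint `x_ℓ` exactly when the block contains the index `2ℓ` of
the atom sitting there, the interval catches precisely the atoms whose weights `-w_ℓ` occur in
the block. Thus `∫_I p - μ(I)` equals the block sum, disjoint blocks give disjoint intervals,
and every value competing for the discrete norm competes for the continuous one.
-/

section AkDist

variable {k : ℕ} {J : Set ℝ} {g : ℝ → ℝ} {μ : Measure ℝ}

lemma abs_setIntegral_sub_measureReal_le (hg : IntegrableOn g J) [IsFiniteMeasure μ]
    {I : Set ℝ} (hI : I ⊆ J) :
    |(∫ x in I, g x) - (μ I).toReal| ≤ (∫ x in J, |g x|) + μ.real univ :=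
  calc |(∫ x in I, g x) - (μ I).toReal| ≤ |∫ x in I, g x| + |(μ I).toReal| := abs_sub _ _
    _ ≤ (∫ x in J, |g x|) + μ.real univ := by
      rw [abs_of_nonneg ENNReal.toReal_nonneg]
      gcongr
      · exact abs_integral_le_integral_abs.trans <| setIntegral_mono_set hg.abs
          (ae_of_all _ fun _ => abs_nonneg _) hI.eventuallyLE
      · exact measureReal_mono (subset_univ I)

lemma sum_le_akDist (hg : IntegrableOn g J) [IsFiniteMeasure μ] (I : Fin k → Set ℝ)
    (hI : ∀ i, I i ⊆ J ∧ (I i).OrdConnected) (hdisj : Pairwise fun i j => Disjoint (I i) (I j)) :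
    ∑ i, |(∫ x in I i, g x) - (μ (I i)).toReal| ≤ akDist k J g μ := by
  refine le_csSup ⟨k * ((∫ x in J, |g x|) + μ.real univ), ?_⟩ ⟨I, hI, hdisj, rfl⟩
  rintro _ ⟨I', hI', -, rfl⟩
  calc ∑ i, |(∫ x in I' i, g x) - (μ (I' i)).toReal|
      ≤ ∑ _i : Fin k, ((∫ x in J, |g x|) + μ.real univ) :=
        Finset.sum_le_sum fun i _ => abs_setIntegral_sub_measureReal_le hg (hI' i).1
    _ = k * ((∫ x in J, |g x|) + μ.real univ) := by simp [mul_add]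

lemma Finset.lt_or_lt_of_disjoint_Icc {α : Type*} [LinearOrder α] [LocallyFiniteOrder α]
    {u v u' v' : α} (hu : u ≤ v) (hu' : u' ≤ v')
    (h : Disjoint (Finset.Icc u v) (Finset.Icc u' v')) : v < u' ∨ v' < u := by
  by_contra! hc
  exact Finset.disjoint_left.mp h
    (Finset.mem_Icc.mpr ⟨le_max_left _ _, max_le hu hc.1⟩)
    (Finset.mem_Icc.mpr ⟨le_max_right _ _, max_le hc.2 hu'⟩)

theorem akDisc_le_akDist_of_blocks (hg : IntegrableOn g J) [IsFiniteMeasure μ] {r : ℕ}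
    {a : ℕ → ℝ} (B : ℕ → ℕ → Set ℝ)
    (hB : ∀ u v, 1 ≤ u → u ≤ v → v ≤ r → B u v ⊆ J ∧ (B u v).OrdConnected)
    (hBdisj : ∀ u v u' v', 1 ≤ u → u ≤ v → v < u' → u' ≤ v' → v' ≤ r →
      Disjoint (B u v) (B u' v'))
    (hBsum : ∀ u v, 1 ≤ u → u ≤ v → v ≤ r →
      (∫ x in B u v, g x) - (μ (B u v)).toReal = ∑ i ∈ Finset.Icc u v, a i) :
    akDisc r k a ≤ akDist k J g μ := by
  refine csSup_le ⟨0, 0, Fin.elim0, Fin.elim0, k.zero_le, fun j => j.elim0, fun j => j.elim0, by simp⟩ ?_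
  rintro _ ⟨m, u, v, hm, huv, hdisj, rfl⟩
  set e : Fin m → Fin k := Fin.castLE hm
  have he : Function.Injective e := Fin.castLE_injective hm
  set I : Fin k → Set ℝ := Function.extend e (fun j => B (u j) (v j)) fun _ => ∅
  have hI_mem : ∀ j, I (e j) = B (u j) (v j) := he.extend_apply _ _
  have hI_out : ∀ i ∉ range e, I i = ∅ := fun i hi => Function.extend_apply' _ _ _ hi
  have hB' : ∀ i, I i ⊆ J ∧ (I i).OrdConnected := by
    intro i
    by_cases hi : i ∈ range e
    · obtain ⟨j, rfl⟩ := hi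
      rw [hI_mem]
      exact hB _ _ (huv j).1 (huv j).2.1 (huv j).2.2
    · rw [hI_out i hi]
      exact ⟨empty_subset J, ordConnected_empty⟩
  have hIdisj : Pairwise fun i i' => Disjoint (I i) (I i') := by
    intro i i' hii'
    by_cases hi : i ∈ range e
    · by_cases hi' : i' ∈ range e
      · obtain ⟨j, rfl⟩ := hi
        obtain ⟨j', rfl⟩ := hi'
        rw [hI_mem, hI_mem]
        obtain ⟨hu, hle, hv⟩ := huv j
        obtain ⟨hu', hle', hv'⟩ := huv j'
        rcases Finset.lt_or_lt_of_disjoint_Icc hle hle' (hdisj (ne_of_apply_ne e hii')) with h | h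
        · exact hBdisj _ _ _ _ hu hle h hle' hv'
        · exact (hBdisj _ _ _ _ hu' hle' h hle hv).symm
      · rw [hI_out i' hi']
        exact disjoint_empty _
    · rw [hI_out i hi]
      exact empty_disjoint _
  calc ∑ j, |∑ i ∈ Finset.Icc (u j) (v j), a i|
      = ∑ i, |(∫ x in I i, g x) - (μ (I i)).toReal| := by
        refine Fintype.sum_of_injective e he _ _ (fun i hi => by simp [hI_out i hi]) fun j => ?_
        rw [hI_mem, hBsum _ _ (huv j).1 (huv j).2.1 (huv j).2.2]
    _ ≤ akDist k J g μ := sum_le_akDist hg I hB' hIdisj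

end AkDist

lemma Finset.sum_Icc_eq_sum_odd_add_sum_even {M : Type*} [AddCommMonoid M] (f : ℕ → M)
    {s u v : ℕ} (hu : 1 ≤ u) (hv : v ≤ 2 * s + 1) :
    ∑ i ∈ Finset.Icc u v, f i = ∑ j ∈ Finset.Ico (u / 2) ((v + 1) / 2), f (2 * j + 1) +
      ∑ ℓ ∈ Finset.Icc 1 s with u ≤ 2 * ℓ ∧ 2 * ℓ ≤ v, f (2 * ℓ) := by
  rw [← Finset.sum_filter_add_sum_filter_not (Finset.Icc u v) (fun i => i % 2 = 1)]
  congr 1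
  · refine Finset.sum_nbij' (fun i => i / 2) (fun j => 2 * j + 1) ?_ ?_ ?_ ?_ ?_ <;>
      simp only [Finset.mem_filter, Finset.mem_Icc, Finset.mem_Ico, mem_Ico] <;>
      intros <;> first | omega | congr 1; omega
  · refine Finset.sum_nbij' (fun i => i / 2) (fun ℓ => 2 * ℓ) ?_ ?_ ?_ ?_ ?_ <;>
      simp only [Finset.mem_filter, Finset.mem_Icc, mem_Icc] <;>
      intros <;> first | omega | congr 1; omega

lemma measureReal_sum_smul_dirac {α ι : Type*} [MeasurableSpace α] [MeasurableSingletonClass α]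
    (S : Finset ι) {w : ι → ℝ} (hw : ∀ i ∈ S, 0 ≤ w i) (y : ι → α) (A : Set α)
    [DecidablePred fun i => y i ∈ A] :
    ((∑ i ∈ S, ENNReal.ofReal (w i) • Measure.dirac (y i)) A).toReal =
      ∑ i ∈ S with y i ∈ A, w i := by
  rw [Measure.coe_finsetSum, Finset.sum_apply, ENNReal.toReal_sum, Finset.sum_filter]
  swap
  · intro i _
    rw [Measure.smul_apply, smul_eq_mul]
    exact ENNReal.mul_ne_top ENNReal.ofReal_ne_top (measure_ne_top _ _)
  refine Finset.sum_congr rfl fun i hi => ?_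
  by_cases h : y i ∈ A <;> simp [Measure.dirac_apply, h, hw i hi]

lemma monotoneOn_Icc_of_lt_add_one {s : ℕ} {x : ℕ → ℝ} (h0 : x 0 ≤ x 1) (hs : x s ≤ x (s + 1))
    (hmono : ∀ ℓ, 1 ≤ ℓ → ℓ < s → x ℓ < x (ℓ + 1)) : MonotoneOn x (Icc 0 (s + 1)) := by
  refine monotoneOn_of_le_add_one ordConnected_Icc fun a _ _ ha => ?_
  rcases Nat.eq_zero_or_pos a with rfl | ha0
  · exact h0
  rcases eq_or_ne a s with rfl | has
  · exact hs
  exact (hmono a ha0 (by simp at ha; omega)).le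

lemma strictMonoOn_Icc_of_lt_add_one {s : ℕ} {x : ℕ → ℝ}
    (hmono : ∀ ℓ, 1 ≤ ℓ → ℓ < s → x ℓ < x (ℓ + 1)) : StrictMonoOn x (Icc 1 s) :=
  strictMonoOn_of_lt_add_one ordConnected_Icc fun a _ ha ha' => hmono a ha.1 (by simp at ha'; omega)

section BlockSet

variable (s : ℕ) (x : ℕ → ℝ)

/-- The left endpoint `x_{⌊u/2⌋}` is included iff `u = 2ℓ` indexes the atom `x_ℓ`, or `u = 1`:
then the endpoint is `x₀ = -1`, which carries no atom but may coincide with `x₁`. -/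
def lowerRay (u : ℕ) : Set ℝ :=
  if u % 2 = 0 ∨ u = 1 then Ici (x (u / 2)) else Ioi (x (u / 2))

def upperRay (v : ℕ) : Set ℝ :=
  if v % 2 = 0 ∨ v = 2 * s + 1 then Iic (x ((v + 1) / 2)) else Iio (x ((v + 1) / 2))

def blockSet (u v : ℕ) : Set ℝ := lowerRay x u ∩ upperRay s x v

variable {s x}

instance (u v : ℕ) : (blockSet s x u v).OrdConnected := by
  unfold blockSet lowerRay upperRay
  split_ifs <;> infer_instance

lemma blockSet_subset_Icc (u v : ℕ) :
    blockSet s x u v ⊆ Icc (x (u / 2)) (x ((v + 1) / 2)) := by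
  unfold blockSet lowerRay upperRay
  split_ifs <;> intro t ht <;> simp only [mem_inter_iff, mem_Ici, mem_Ioi, mem_Iic, mem_Iio] at ht <;>
    exact ⟨by linarith [ht.1], by linarith [ht.2]⟩

lemma blockSet_ae_eq_Ioc (u v : ℕ) :
    blockSet s x u v =ᵐ[volume] Ioc (x (u / 2)) (x ((v + 1) / 2)) := by
  unfold blockSet lowerRay upperRay
  split_ifs
  · rw [Ici_inter_Iic]; exact Ioc_ae_eq_Icc.symm
  · rw [Ici_inter_Iio]; exact Ico_ae_eq_Icc.trans Ioc_ae_eq_Icc.symm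
  · rw [Ioi_inter_Iic]; exact Filter.EventuallyEq.rfl
  · rw [Ioi_inter_Iio]; exact Ioo_ae_eq_Ioc

variable (hx : MonotoneOn x (Icc 0 (s + 1))) (hx' : StrictMonoOn x (Icc 1 s))
include hx hx'

lemma mem_lowerRay_iff {u ℓ : ℕ} (hu : 1 ≤ u) (hus : u ≤ 2 * s + 1) (hℓ : ℓ ∈ Icc 1 s) :
    x ℓ ∈ lowerRay x u ↔ u ≤ 2 * ℓ := by
  have hmem : u / 2 ∈ Icc 1 s ∨ u = 1 := by rw [mem_Icc]; omega
  simp only [mem_Icc] at hℓ hmem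
  unfold lowerRay
  split_ifs with h
  · rcases hmem with hmem | rfl
    · rw [mem_Ici, hx'.le_iff_le hmem hℓ]; omega
    · exact iff_of_true (hx (by simp) (by simp; omega) (by omega)) (by omega)
  · rw [mem_Ioi, hx'.lt_iff_lt ⟨by omega, by omega⟩ hℓ]; omega

lemma mem_upperRay_iff {v ℓ : ℕ} (hv : 1 ≤ v) (hvs : v ≤ 2 * s + 1) (hℓ : ℓ ∈ Icc 1 s) :
    x ℓ ∈ upperRay s x v ↔ 2 * ℓ ≤ v := by
  have hmem : (v + 1) / 2 ∈ Icc 1 s ∨ v = 2 * s + 1 := by rw [mem_Icc]; omega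
  simp only [mem_Icc] at hℓ hmem
  unfold upperRay
  split_ifs with h
  · rcases hmem with hmem | rfl
    · rw [mem_Iic, hx'.le_iff_le hℓ hmem]; omega
    · exact iff_of_true (hx (by simp; omega) (by simp; omega) (by omega)) (by omega)
  · rw [mem_Iio, hx'.lt_iff_lt hℓ ⟨by omega, by omega⟩]; omega

lemma disjoint_upperRay_lowerRay {v u : ℕ} (hv : 1 ≤ v) (hvu : v < u) (hus : u ≤ 2 * s + 1) :
    Disjoint (upperRay s x v) (lowerRay x u) := by
  rw [Set.disjoint_left]
  intro t htv htu
  unfold upperRay at htv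
  unfold lowerRay at htu
  have hle : x ((v + 1) / 2) ≤ x (u / 2) := hx (by simp; omega) (by simp; omega) (by omega)
  split_ifs at htv htu with hv' hu'
  · have : x ((v + 1) / 2) < x (u / 2) := hx' (by simp; omega) (by simp; omega) (by omega)
    linarith [mem_Iic.mp htv, mem_Ici.mp htu]
  · linarith [mem_Iic.mp htv, mem_Ioi.mp htu]
  · linarith [mem_Iio.mp htv, mem_Ici.mp htu]
  · linarith [mem_Iio.mp htv, mem_Ioi.mp htu]

lemma disjoint_blockSet {u v u' v' : ℕ} (hu : 1 ≤ u) (huv : u ≤ v) (hvu' : v < u')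
    (hu'v' : u' ≤ v') (hv' : v' ≤ 2 * s + 1) :
    Disjoint (blockSet s x u v) (blockSet s x u' v') :=
  (disjoint_upperRay_lowerRay hx hx' (by omega) hvu' (by omega)).mono
    inter_subset_right inter_subset_left

lemma integral_sub_measure_blockSet {f : ℝ → ℝ} (hf : Continuous f) {w D : ℕ → ℝ}
    (hw : ∀ ℓ ∈ Finset.Icc 1 s, 0 ≤ w ℓ)
    (hDodd : ∀ j ≤ s, D (2 * j + 1) = ∫ t in x j..x (j + 1), f t)
    (hDeven : ∀ ℓ ∈ Finset.Icc 1 s, D (2 * ℓ) = -w ℓ)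
    {u v : ℕ} (hu : 1 ≤ u) (huv : u ≤ v) (hv : v ≤ 2 * s + 1) :
    (∫ t in blockSet s x u v, f t) -
      ((∑ ℓ ∈ Finset.Icc 1 s, ENNReal.ofReal (w ℓ) • Measure.dirac (x ℓ))
        (blockSet s x u v)).toReal = ∑ i ∈ Finset.Icc u v, D i := by
  classical
  have hends : x (u / 2) ≤ x ((v + 1) / 2) := hx (by simp; omega) (by simp; omega) (by omega)
  have hatoms : ∀ ℓ ∈ Finset.Icc 1 s, x ℓ ∈ blockSet s x u v ↔ u ≤ 2 * ℓ ∧ 2 * ℓ ≤ v :=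
    fun ℓ hℓ => and_congr (mem_lowerRay_iff hx hx' hu (by omega) (by simpa using hℓ))
      (mem_upperRay_iff hx hx' (by omega) hv (by simpa using hℓ))
  rw [Finset.sum_Icc_eq_sum_odd_add_sum_even D hu hv,
    setIntegral_congr_set (blockSet_ae_eq_Ioc u v), ← intervalIntegral.integral_of_le hends,
    ← intervalIntegral.sum_integral_adjacent_intervals_Ico (by omega)
      fun j _ => hf.intervalIntegrable _ _,
    measureReal_sum_smul_dirac _ hw, Finset.filter_congr hatoms, sub_eq_add_neg,
    ← Finset.sum_neg_distrib]
  congr 1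
  · exact Finset.sum_congr rfl fun j hj => (hDodd j (by simp at hj; omega)).symm
  · exact Finset.sum_congr rfl fun ℓ hℓ => (hDeven ℓ (Finset.mem_filter.mp hℓ).1).symm

end BlockSet

theorem stmt12_general (s : ℕ) (x : ℕ → ℝ) (w : ℕ → ℝ)
    (hx0 : x 0 = -1) (hxtop : x (s + 1) = 1)
    (hx1 : -1 ≤ x 1) (hxs : x s ≤ 1)
    (hmono : ∀ ℓ, 1 ≤ ℓ → ℓ < s → x ℓ < x (ℓ + 1))
    (hw : ∀ ℓ ∈ Finset.Icc 1 s, 0 < w ℓ)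
    (p : Polynomial ℝ) (D : ℕ → ℝ)
    (hDodd : ∀ ℓ ∈ Finset.Icc 1 (s + 1),
      D (2 * ℓ - 1) = ∫ t in (x (ℓ - 1))..(x ℓ), p.eval t)
    (hDeven : ∀ ℓ ∈ Finset.Icc 1 s, D (2 * ℓ) = -(w ℓ))
    (k : ℕ) :
    akDisc (2 * s + 1) k D ≤
      akDist k (Set.Icc (-1 : ℝ) 1) (fun t => p.eval t)
        (∑ ℓ ∈ Finset.Icc 1 s, ENNReal.ofReal (w ℓ) • Measure.dirac (x ℓ)) := by
  have hx : MonotoneOn x (Icc 0 (s + 1)) :=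
    monotoneOn_Icc_of_lt_add_one (hx0 ▸ hx1) (hxtop ▸ hxs) hmono
  have hx' : StrictMonoOn x (Icc 1 s) := strictMonoOn_Icc_of_lt_add_one hmono
  have (ℓ : ℕ) : IsFiniteMeasure (ENNReal.ofReal (w ℓ) • Measure.dirac (x ℓ)) :=
    Measure.smul_finite _ ENNReal.ofReal_ne_top
  refine akDisc_le_akDist_of_blocks p.continuous.integrableOn_Icc (blockSet s x)
    (fun u v _ _ hv => ⟨?_, inferInstance⟩)
    (fun u v u' v' hu huv hvu' hu'v' hv' => disjoint_blockSet hx hx' hu huv hvu' hu'v' hv')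
    (fun u v hu huv hv => ?_)
  · refine (blockSet_subset_Icc u v).trans (Icc_subset_Icc ?_ ?_)
    · rw [← hx0]; exact hx (by simp) (by simp; omega) (Nat.zero_le _)
    · rw [← hxtop]; exact hx (by simp; omega) (by simp) (by omega)
  · refine integral_sub_measure_blockSet hx hx' p.continuous (fun ℓ hℓ => (hw ℓ hℓ).le)
      (fun j hj => ?_) hDeven hu huv hv
    have := hDodd (j + 1) (by simp; omega)
    rwa [show 2 * (j + 1) - 1 = 2 * j + 1 by omega, Nat.add_sub_cancel] at this

/-- Let `μ = ∑_{ℓ=1}^s w_ℓ δ_{x_ℓ}` with `−1 ≤ x₁ < … < x_s ≤ 1` and `w_ℓ > 0`, let `p` be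
any real polynomial, and let `D` be the associated alternating sequence of length `2s+1`
(with `D(2ℓ−1) = ∫_{x_{ℓ−1}}^{x_ℓ} p` for `ℓ = 1, …, s+1`, where `x₀ = −1`, `x_{s+1} = 1`,
and `D(2ℓ) = −w_ℓ` for `ℓ = 1, …, s`). Then for every positive integer `k`,
`‖p − μ‖_{A_k,[−1,1]} ≥ ‖D‖_{A_k}^{disc}`. -/
theorem stmt12 (s : ℕ) (hs : 0 < s) (x : ℕ → ℝ) (w : ℕ → ℝ)
    (hx0 : x 0 = -1) (hxtop : x (s + 1) = 1)
    (hx1 : -1 ≤ x 1) (hxs : x s ≤ 1)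
    (hmono : ∀ ℓ, 1 ≤ ℓ → ℓ < s → x ℓ < x (ℓ + 1))
    (hw : ∀ ℓ ∈ Finset.Icc 1 s, 0 < w ℓ)
    (p : Polynomial ℝ) (D : ℕ → ℝ)
    (hDodd : ∀ ℓ ∈ Finset.Icc 1 (s + 1),
      D (2 * ℓ - 1) = ∫ t in (x (ℓ - 1))..(x ℓ), p.eval t)
    (hDeven : ∀ ℓ ∈ Finset.Icc 1 s, D (2 * ℓ) = -(w ℓ))
    (k : ℕ) (hk : 0 < k) :
    akDisc (2 * s + 1) k D ≤
      akDist k (Set.Icc (-1 : ℝ) 1) (fun t => p.eval t)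
        (∑ ℓ ∈ Finset.Icc 1 s, ENNReal.ofReal (w ℓ) • Measure.dirac (x ℓ)) :=
  stmt12_general s x w hx0 hxtop hx1 hxs hmono hw p D hDodd hDeven k
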